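/- Let (C, d, U, D₁, D₂) and (C′, d′, U′, D₁′, D₂′) be Floer data over a field Λ, let (c, φ, μ, Δ₁, Δ₂) be a cobordism datum between them, and let ČW : Č → Č′ be as defined in the context. Then ČW is a chain map: ď′ ∘ ČW = ČW ∘ ď. -/

import Mathlib

noncomputable section

variable (Λ : Type*) (V : Type*) [Field Λ] [AddCommGroup V] [Module Λ V]

/-- A Floer datum over the field `Λ`. -/
structure FloerDatum where
  gr : ZMod 8 → Submodule Λ V
  internal : DirectSum.IsInternal gr
  d : V →ₗ[Λ] V
  U : V →ₗ[Λ] V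
  D₁ : V →ₗ[Λ] Λ
  D₂ : Λ →ₗ[Λ] V
  d_mem : ∀ (i : ZMod 8), ∀ v ∈ gr i, d v ∈ gr (i - 1)
  U_mem : ∀ (i : ZMod 8), ∀ v ∈ gr i, U v ∈ gr (i - 4)
  D₁_vanish : ∀ (i : ZMod 8), i ≠ 1 → ∀ v ∈ gr i, D₁ v = 0
  D₂_mem : ∀ a : Λ, D₂ a ∈ gr 4
  d_d : d ∘ₗ d = 0
  D₁_d : D₁ ∘ₗ d = 0
  d_D₂ : d ∘ₗ D₂ = 0
  U_rel : U ∘ₗ d - d ∘ₗ U + D₂ ∘ₗ D₁ = 0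

variable (V' : Type*) [AddCommGroup V'] [Module Λ V']
variable {Λ V V'}

/-- A cobordism datum between two Floer data. -/
structure CobordismDatum (F : FloerDatum Λ V) (F' : FloerDatum Λ V') where
  c : Λ
  φ : V →ₗ[Λ] V'
  μ : V →ₗ[Λ] V'
  Δ₁ : V →ₗ[Λ] Λ
  Δ₂ : Λ →ₗ[Λ] V'
  φ_mem : ∀ (i : ZMod 8), ∀ v ∈ F.gr i, φ v ∈ F'.gr i
  μ_mem : ∀ (i : ZMod 8), ∀ v ∈ F.gr i, μ v ∈ F'.gr (i - 3)
  Δ₁_vanish : ∀ (i : ZMod 8), i ≠ 0 → ∀ v ∈ F.gr i, Δ₁ v = 0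
  Δ₂_mem : ∀ a : Λ, Δ₂ a ∈ F'.gr 5
  rel_d : φ ∘ₗ F.d = F'.d ∘ₗ φ
  rel_D₁ : Δ₁ ∘ₗ F.d + c • F.D₁ = F'.D₁ ∘ₗ φ
  rel_D₂ : φ ∘ₗ F.D₂ = c • F'.D₂ - F'.d ∘ₗ Δ₂
  rel_U : μ ∘ₗ F.d + F'.d ∘ₗ μ + Δ₂ ∘ₗ F.D₁ + φ ∘ₗ F.U - F'.U ∘ₗ φ - F'.D₂ ∘ₗ Δ₁ = 0

variable {W : Type*} [AddCommGroup W] [Module Λ W]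
variable {M : Type*} [AddCommGroup M] [Module Λ M]

/-- `p = Σ aᵢ xⁱ ↦ Σ f i aᵢ`, as a linear map on polynomials. -/
def polySum (f : ℕ → (Λ →ₗ[Λ] W)) : Polynomial Λ →ₗ[Λ] W where
  toFun p := p.sum fun i a => f i a
  map_add' p q :=
    Polynomial.sum_add_index p q _ (fun i => map_zero (f i)) (fun i b c => map_add (f i) b c)
  map_smul' a p := by
    show (a • p).sum (fun i b => f i b) = a • p.sum fun i b => f i b
    rw [Polynomial.sum_smul_index p a _ (fun i => map_zero (f i)),
      Polynomial.sum, Polynomial.sum, Finset.smul_sum]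
    exact Finset.sum_congr rfl fun n _ => by rw [← smul_eq_mul, map_smul]

/-- The differential `d̂` on `Ĉ = C ⊕ Λ[x]`. -/
def hatd (F : FloerDatum Λ V) : (V × Polynomial Λ) →ₗ[Λ] (V × Polynomial Λ) :=
  ((F.d ∘ₗ LinearMap.fst Λ V (Polynomial Λ))
    - (polySum fun i => (F.U ^ i) ∘ₗ F.D₂) ∘ₗ LinearMap.snd Λ V (Polynomial Λ)).prod 0

/-- The map `X̂(α, p) = (U α, D₁ α + x·p)` on `Ĉ`. -/
def hatX (F : FloerDatum Λ V) : (V × Polynomial Λ) →ₗ[Λ] (V × Polynomial Λ) :=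
  (F.U ∘ₗ LinearMap.fst Λ V (Polynomial Λ)).prod
    ((Algebra.linearMap Λ (Polynomial Λ)) ∘ₗ F.D₁ ∘ₗ LinearMap.fst Λ V (Polynomial Λ)
      + (LinearMap.mulLeft Λ (Polynomial.X : Polynomial Λ)) ∘ₗ LinearMap.snd Λ V (Polynomial Λ))

/-- The cobordism map `ĈW : Ĉ → Ĉ′`. -/
def hatCW {F : FloerDatum Λ V} {F' : FloerDatum Λ V'} (G : CobordismDatum F F') :
    (V × Polynomial Λ) →ₗ[Λ] (V' × Polynomial Λ) :=
  (G.φ ∘ₗ LinearMap.fst Λ V (Polynomial Λ)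
    + (polySum fun i => (F'.U ^ i) ∘ₗ G.Δ₂
        + ∑ k ∈ Finset.range i, (F'.U ^ k) ∘ₗ G.μ ∘ₗ (F.U ^ (i - 1 - k)) ∘ₗ F.D₂)
        ∘ₗ LinearMap.snd Λ V (Polynomial Λ)).prod
  (G.c • LinearMap.snd Λ V (Polynomial Λ)
    + (polySum fun k =>
        (∑ i ∈ Finset.range k,
          (LinearMap.smulRight (F'.D₁ ∘ₗ (F'.U ^ (k - 1 - i)) ∘ₗ G.Δ₂)
              ((Polynomial.X : Polynomial Λ) ^ i)
            + LinearMap.smulRight (G.Δ₁ ∘ₗ (F.U ^ (k - 1 - i)) ∘ₗ F.D₂)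
              ((Polynomial.X : Polynomial Λ) ^ i)))
        + ∑ j ∈ Finset.range k, ∑ i ∈ Finset.range j,
            LinearMap.smulRight
              (F'.D₁ ∘ₗ (F'.U ^ (j - i - 1)) ∘ₗ G.μ ∘ₗ (F.U ^ (k - j - 1)) ∘ₗ F.D₂)
              ((Polynomial.X : Polynomial Λ) ^ i))
      ∘ₗ LinearMap.snd Λ V (Polynomial Λ))

/-- Package a family of `Λ`-linear coefficient functionals into a linear map to power series.
We use `PowerSeries Λ` (in the variable `x⁻¹`) as a model for `x⁻¹Λ[[x⁻¹]]`: a power series `q`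
represents the series `Σ_{n≥0} (coeff n q) x^{-(n+1)}`. -/
def toPS (c : ℕ → (M →ₗ[Λ] Λ)) : M →ₗ[Λ] PowerSeries Λ where
  toFun m := PowerSeries.mk fun n => c n m
  map_add' x y := by
    ext n
    simp [PowerSeries.coeff_mk]
  map_smul' a x := by
    ext n
    simp [PowerSeries.coeff_mk]

/-- The differential `ď` on `Č = C ⊕ x⁻¹Λ[[x⁻¹]]`. -/
def checkd (F : FloerDatum Λ V) : (V × PowerSeries Λ) →ₗ[Λ] (V × PowerSeries Λ) :=
  (F.d ∘ₗ LinearMap.fst Λ V (PowerSeries Λ)).prod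
    ((toPS fun n => F.D₁ ∘ₗ (F.U ^ n)) ∘ₗ LinearMap.fst Λ V (PowerSeries Λ))

/-- The map `X̌` on `Č`. -/
def checkX (F : FloerDatum Λ V) : (V × PowerSeries Λ) →ₗ[Λ] (V × PowerSeries Λ) :=
  (F.U ∘ₗ LinearMap.fst Λ V (PowerSeries Λ)
      + F.D₂ ∘ₗ (PowerSeries.coeff (R := Λ) 0) ∘ₗ LinearMap.snd Λ V (PowerSeries Λ)).prod
    ((toPS fun n => PowerSeries.coeff (R := Λ) (n + 1)) ∘ₗ LinearMap.snd Λ V (PowerSeries Λ))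

variable {F : FloerDatum Λ V} {F' : FloerDatum Λ V'}

/-- `α ↦ Σ_{i≤-1} Δ₁(U^{-i-1} α) xⁱ`. -/
def tailDelta (G : CobordismDatum F F') : V →ₗ[Λ] PowerSeries Λ :=
  toPS fun n => G.Δ₁ ∘ₗ (F.U ^ n)

/-- `α ↦ Σ_{i≤-2} (Σ_{i+1≤j≤-1} D₁′(U′^{-j-1}(μ(U^{j-i-1} α)))) xⁱ`. -/
def tailMu (G : CobordismDatum F F') : V →ₗ[Λ] PowerSeries Λ :=
  toPS fun n => ∑ m ∈ Finset.range n, F'.D₁ ∘ₗ (F'.U ^ m) ∘ₗ G.μ ∘ₗ (F.U ^ (n - 1 - m))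

/-- The series (in nonpositive powers of `x`, i.e. a power series in `t = x⁻¹`)
`S = c + Σ_{j≤-1} Δ₁(U^{-j-1}(D₂ 1)) xʲ + Σ_{j≤-1} D₁′(U′^{-j-1}(Δ₂ 1)) xʲ
   + Σ_{j,k≤-1} D₁′(U′^{-j-1}(μ(U^{-k-1}(D₂ 1)))) x^{j+k}`. -/
def Sser (G : CobordismDatum F F') : PowerSeries Λ :=
  PowerSeries.mk fun m =>
    match m with
    | 0 => G.c
    | n + 1 =>
      G.Δ₁ ((F.U ^ n) (F.D₂ 1)) + F'.D₁ ((F'.U ^ n) (G.Δ₂ 1)) +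
        ∑ s ∈ Finset.range n, F'.D₁ ((F'.U ^ s) (G.μ ((F.U ^ (n - 1 - s)) (F.D₂ 1))))

/-- The cobordism map `ČW : Č → Č′`. -/
def checkCW (G : CobordismDatum F F') : (V × PowerSeries Λ) →ₗ[Λ] (V' × PowerSeries Λ) :=
  (G.φ ∘ₗ LinearMap.fst Λ V (PowerSeries Λ)).prod
    ((tailDelta G + tailMu G) ∘ₗ LinearMap.fst Λ V (PowerSeries Λ)
      + (LinearMap.mulRight Λ (Sser G)) ∘ₗ LinearMap.snd Λ V (PowerSeries Λ))

namespace FloerDatum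

variable (F : FloerDatum Λ V)

lemma pow_U_mem (n : ℕ) {i : ZMod 8} {v : V} (hv : v ∈ F.gr i) :
    (F.U ^ n) v ∈ F.gr (i - 4 * n) := by
  induction n with
  | zero => simpa using hv
  | succ n ih =>
    rw [pow_succ', Module.End.mul_apply]
    convert F.U_mem _ _ ih using 2
    push_cast
    ring

/-- `U^n (D₂ a)` has degree `4 - 4n ∈ {0, 4}`, never the degree `1` seen by `D₁`. -/
lemma D₁_pow_U_D₂ (n : ℕ) (a : Λ) : F.D₁ ((F.U ^ n) (F.D₂ a)) = 0 := by
  refine F.D₁_vanish (4 - 4 * n) ?_ _ (F.pow_U_mem n (F.D₂_mem a))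
  have : ∀ m : ZMod 8, (4 : ZMod 8) - 4 * m ≠ 1 := by decide
  exact this n

lemma d_U_apply (v : V) : F.d (F.U v) = F.U (F.d v) + F.D₂ (F.D₁ v) := by
  have h := DFunLike.congr_fun F.U_rel v
  simp only [LinearMap.add_apply, LinearMap.sub_apply, LinearMap.comp_apply,
    LinearMap.zero_apply] at h
  rw [← sub_eq_zero, ← neg_eq_zero, ← h]
  abel

lemma D₁_pow_U_d (n : ℕ) (v : V) : F.D₁ ((F.U ^ n) (F.d v)) = 0 := by
  induction n generalizing v with
  | zero => simpa using DFunLike.congr_fun F.D₁_d v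
  | succ n ih =>
    rw [pow_succ, Module.End.mul_apply, eq_sub_of_add_eq (F.d_U_apply v).symm, map_sub,
      map_sub, ih, F.D₁_pow_U_D₂, sub_zero]

end FloerDatum

@[simp] lemma coeff_toPS (c : ℕ → (M →ₗ[Λ] Λ)) (m : M) (n : ℕ) :
    PowerSeries.coeff n (toPS c m) = c n m := by
  simp [toPS]

lemma LinearMap.apply_eq_smul_apply_one (f : Λ →ₗ[Λ] M) (a : Λ) : f a = a • f 1 := by
  rw [← map_smul, smul_eq_mul, mul_one]

namespace CobordismDatum

open Finset

variable (G : CobordismDatum F F')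

lemma U_φ_apply (v : V) :
    F'.U (G.φ v) =
      G.μ (F.d v) + F'.d (G.μ v) + G.Δ₂ (F.D₁ v) + G.φ (F.U v) - F'.D₂ (G.Δ₁ v) := by
  have h := DFunLike.congr_fun G.rel_U v
  simp only [LinearMap.add_apply, LinearMap.sub_apply, LinearMap.comp_apply,
    LinearMap.zero_apply] at h
  rw [← sub_eq_zero, ← neg_eq_zero, ← h]
  abel

lemma coeff_zero_Sser : PowerSeries.coeff 0 (Sser G) = G.c := by
  simp [Sser]

lemma coeff_succ_Sser (n : ℕ) :
    PowerSeries.coeff (n + 1) (Sser G) =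
      G.Δ₁ ((F.U ^ n) (F.D₂ 1)) + F'.D₁ ((F'.U ^ n) (G.Δ₂ 1)) +
        ∑ s ∈ range n, F'.D₁ ((F'.U ^ s) (G.μ ((F.U ^ (n - 1 - s)) (F.D₂ 1)))) := by
  simp [Sser]

/-- Apply `D₁′ U′ⁿ` to `U′ φ = φ U + μ d + d′ μ + Δ₂ D₁ - D₂′ Δ₁` and induct on `n`: the terms
`D₁′ U′ⁿ d′` and `D₁′ U′ⁿ D₂′` vanish, and commuting `d` past `U` via `d U = U d + D₂ D₁`
produces exactly the coefficient `D₁ α · Sₙ₊₁` of the series `S`. -/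
lemma D₁_pow_U_φ (n : ℕ) (α : V) :
    F'.D₁ ((F'.U ^ n) (G.φ α)) =
      G.Δ₁ ((F.U ^ n) (F.d α))
      + ∑ m ∈ range n, F'.D₁ ((F'.U ^ m) (G.μ ((F.U ^ (n - 1 - m)) (F.d α))))
      + ∑ p ∈ antidiagonal n, F.D₁ ((F.U ^ p.1) α) * PowerSeries.coeff p.2 (Sser G) := by
  induction n generalizing α with
  | zero =>
    have h := DFunLike.congr_fun G.rel_D₁ α
    simp only [LinearMap.add_apply, LinearMap.comp_apply, LinearMap.smul_apply,
      smul_eq_mul] at h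
    simp [← h, coeff_zero_Sser, mul_comm]
  | succ n ih =>
    have hU : ∀ k v, (F.U ^ k) (F.U v) = (F.U ^ (k + 1)) v := fun k v => by
      rw [pow_succ, Module.End.mul_apply]
    have hΔ₁ : G.Δ₁ ((F.U ^ n) (F.d (F.U α))) =
        G.Δ₁ ((F.U ^ (n + 1)) (F.d α)) + F.D₁ α * G.Δ₁ ((F.U ^ n) (F.D₂ 1)) := by
      rw [F.d_U_apply, map_add, map_add, hU, LinearMap.apply_eq_smul_apply_one F.D₂,
        map_smul, map_smul, smul_eq_mul]
    have hμ : ∑ m ∈ range n,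
          F'.D₁ ((F'.U ^ m) (G.μ ((F.U ^ (n - 1 - m)) (F.d (F.U α))))) =
        ∑ m ∈ range n, F'.D₁ ((F'.U ^ m) (G.μ ((F.U ^ (n - m)) (F.d α))))
        + F.D₁ α * ∑ m ∈ range n,
            F'.D₁ ((F'.U ^ m) (G.μ ((F.U ^ (n - 1 - m)) (F.D₂ 1)))) := by
      rw [mul_sum, ← sum_add_distrib]
      refine sum_congr rfl fun m hm => ?_
      have hnm : n - 1 - m + 1 = n - m := by have := mem_range.mp hm; omega
      rw [F.d_U_apply, map_add, hU, hnm, LinearMap.apply_eq_smul_apply_one F.D₂]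
      simp only [map_add, map_smul, smul_eq_mul]
    have hΔ₂ : F'.D₁ ((F'.U ^ n) (G.Δ₂ (F.D₁ α))) = F.D₁ α * F'.D₁ ((F'.U ^ n) (G.Δ₂ 1)) := by
      rw [LinearMap.apply_eq_smul_apply_one G.Δ₂, map_smul, map_smul, smul_eq_mul]
    rw [pow_succ, Module.End.mul_apply, U_φ_apply, map_sub, map_add, map_add, map_add,
      map_sub, map_add, map_add, map_add, F'.D₁_pow_U_d, F'.D₁_pow_U_D₂, ih, hΔ₁, hμ, hΔ₂,
      Nat.sum_antidiagonal_succ, sum_range_succ, coeff_succ_Sser]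
    simp only [hU, Nat.add_sub_cancel, Nat.sub_self, pow_zero, Module.End.one_apply]
    ring

lemma toPS_D₁_pow_U_φ (α : V) :
    toPS (fun n => F'.D₁ ∘ₗ F'.U ^ n) (G.φ α) =
      tailDelta G (F.d α) + tailMu G (F.d α) + toPS (fun n => F.D₁ ∘ₗ F.U ^ n) α * Sser G := by
  ext n
  simp only [coeff_toPS, LinearMap.comp_apply, map_add, tailDelta, tailMu,
    LinearMap.sum_apply, PowerSeries.coeff_mul, G.D₁_pow_U_φ]

end CobordismDatum

/-- The cobordism map `ČW` is a chain map: `ď′ ∘ ČW = ČW ∘ ď`. -/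
theorem stmt_9 (G : CobordismDatum F F') :
    checkd F' ∘ₗ checkCW G = checkCW G ∘ₗ checkd F := by
  refine LinearMap.ext fun ⟨α, _⟩ => ?_
  refine Prod.ext ?_ ?_
  · simpa [checkd, checkCW] using (DFunLike.congr_fun G.rel_d α).symm
  · simpa [checkd, checkCW] using G.toPS_D₁_pow_U_φ α
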